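/- Let P be a finite p-group, V a finitely generated indecomposable O-free OP-module with vertex P, S = End_O(V), and B an interior P-algebra with a P-stable O-basis such that B(P) ≠ 0 and 1_B is primitive in B^P. Suppose A is an interior P-algebra with A(P) ≠ 0 admitting a P-stable O-basis and an interior P-algebra embedding g : A → S ⊗_O B. Then the trivial OP-module O is isomorphic to a direct summand of S regarded as an OP-module via conjugation; equivalently, there is an embedding of interior P-algebras O → S^{op} ⊗_O S, where P acts via x ↦ x⁻¹ ⊗ x. -/

import Mathlib

open scoped BigOperators TensorProduct

noncomputable section

section RepMachinery

variable {k : Type*} [CommRing k] {G : Type*} [Group G]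
variable {V : Type*} [AddCommGroup V] [Module k V]

/-- Conjugation of a linear endomorphism by `ρ g`. -/
def conjEnd (ρ : Representation k G V) (g : G) (f : V →ₗ[k] V) : V →ₗ[k] V :=
  ρ g ∘ₗ f ∘ₗ ρ g⁻¹

/-- Higman's criterion: relative projectivity of `ρ` with respect to a subgroup `P ≤ G`:
some `P`-equivariant endomorphism has relative trace `Tr_P^G` equal to the identity. -/
def RelProj (ρ : Representation k G V) (P : Subgroup G) : Prop :=
  ∃ f : V →ₗ[k] V, (∀ u ∈ P, conjEnd ρ u f = f) ∧
    ∑ᶠ x : G ⧸ P, conjEnd ρ (Quotient.out x) f = LinearMap.id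

/-- `P` is a vertex of `ρ`: a minimal subgroup relative to which `ρ` is projective. -/
def IsVertex (ρ : Representation k G V) (P : Subgroup G) : Prop :=
  RelProj ρ P ∧ ∀ Q : Subgroup G, Q < P → ¬ RelProj ρ Q

/-- A `ρ`-stable submodule. -/
def RepStable (ρ : Representation k G V) (N : Submodule k V) : Prop :=
  ∀ g : G, ∀ v ∈ N, ρ g v ∈ N

/-- Indecomposability of a representation. -/
def RepIndecomposable (ρ : Representation k G V) : Prop :=
  Nontrivial V ∧ ∀ N₁ N₂ : Submodule k V, RepStable ρ N₁ → RepStable ρ N₂ →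
    IsCompl N₁ N₂ → N₁ = ⊥ ∨ N₂ = ⊥

variable {W : Type*} [AddCommGroup W] [Module k W]

/-- `(W, σ)` is a direct summand of `(V, ρ)`: there is a split equivariant epi–mono pair. -/
def IsRepSummand (ρ : Representation k G V) (σ : Representation k G W) : Prop :=
  ∃ (π : V →ₗ[k] W) (ι : W →ₗ[k] V), π ∘ₗ ι = LinearMap.id ∧
    (∀ g : G, π ∘ₗ ρ g = σ g ∘ₗ π) ∧ (∀ g : G, ρ g ∘ₗ ι = ι ∘ₗ σ g)

/-- `σ` is a `P`-source of `ρ`: an indecomposable direct summand of the restriction of `ρ`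
to `P` having vertex `P` itself. -/
def IsSource (ρ : Representation k G V) (P : Subgroup G)
    {S : Type*} [AddCommGroup S] [Module k S] (σ : Representation k ↥P S) : Prop :=
  RepIndecomposable σ ∧ IsVertex σ (⊤ : Subgroup ↥P) ∧
    IsRepSummand (ρ.comp P.subtype) σ

end RepMachinery

section BrauerMachinery

variable (k : Type*) [Field k] {G : Type*} [Group G]
variable (A : Type*) [Ring A] [Algebra k A] [MulSemiringAction G A] [SMulCommClass G k A]

/-- The `k`-submodule of `P`-fixed points of `A`. -/
def fixedPts (P : Subgroup G) : Submodule k A where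
  carrier := {a | ∀ g ∈ P, g • a = a}
  add_mem' := fun {a b} ha hb g hg => by rw [smul_add, ha g hg, hb g hg]
  zero_mem' := fun g _ => smul_zero g
  smul_mem' := fun c a ha g hg => by rw [smul_comm, ha g hg]

/-- The relative trace map `Tr_Q^P` (with a choice of coset representatives). -/
def relTrace (Q P : Subgroup G) (a : A) : A :=
  ∑ᶠ x : P ⧸ Q.subgroupOf P, (((Quotient.out x : P) : G) • a)

/-- The image `Tr_Q^P(A^Q)` as a `k`-submodule. -/
def relTraceSub (Q P : Subgroup G) : Submodule k A :=
  Submodule.span k (relTrace A Q P '' (fixedPts k A Q : Set A))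

/-- The kernel of the Brauer homomorphism: `Σ_{Q < P} Tr_Q^P(A^Q)`. -/
def brKerSub (P : Subgroup G) : Submodule k A :=
  ⨆ Q ∈ {Q : Subgroup G | Q < P}, relTraceSub k A Q P

/-- The Brauer quotient `A(P)`. -/
abbrev BrauerQuotient (P : Subgroup G) :=
  fixedPts k A P ⧸ (brKerSub k A P).comap (fixedPts k A P).subtype

end BrauerMachinery

/-!
If `A(P) ≠ 0` and `A` has a `P`-stable basis, some basis element is `P`-fixed: otherwise every
`P`-fixed element is a combination of orbit sums of basis elements with proper stabilisers, i.e.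
of relative traces from proper subgroups, and so lies in the kernel of the Brauer map. Hence the
trivial module is a summand of `A`. The embedding makes `A` a summand of `S ⊗ B` (retract
`m ↦ g⁻¹ (g 1 * m * g 1)`), so `S ⊗ B` has a `P`-fixed `w` and an invariant form `μ` with
`μ w = 1`. Writing `w = ∑ fⱼ ⊗ bⱼ` over the `P`-stable basis of `B`, the scalars `μ (fⱼ ⊗ bⱼ)`
are constant on `P`-orbits of indices; orbits of a `p`-group that are not fixed points have size
divisible by `p`, so some fixed index `j` has `μ (fⱼ ⊗ bⱼ) ≠ 0`, and then `fⱼ` together with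
`μ (- ⊗ bⱼ)` splits off a trivial summand of `S`.
-/

section Summands

variable {k : Type*} [CommRing k] {G : Type*} [Group G]
variable {U V W : Type*} [AddCommGroup U] [Module k U] [AddCommGroup V] [Module k V]
  [AddCommGroup W] [Module k W]

theorem IsRepSummand.trans {ρ : Representation k G U} {σ : Representation k G V}
    {τ : Representation k G W} (hρσ : IsRepSummand ρ σ) (hστ : IsRepSummand σ τ) :
    IsRepSummand ρ τ := by
  obtain ⟨π₁, ι₁, h₁, hπ₁, hι₁⟩ := hρσ
  obtain ⟨π₂, ι₂, h₂, hπ₂, hι₂⟩ := hστ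
  refine ⟨π₂ ∘ₗ π₁, ι₁ ∘ₗ ι₂, ?_, fun g => ?_, fun g => ?_⟩
  · rw [LinearMap.comp_assoc, ← LinearMap.comp_assoc ι₂, h₁, LinearMap.id_comp, h₂]
  · rw [LinearMap.comp_assoc, hπ₁, ← LinearMap.comp_assoc, hπ₂, LinearMap.comp_assoc]
  · rw [← LinearMap.comp_assoc, hι₁, LinearMap.comp_assoc, hι₂, LinearMap.comp_assoc]

theorem isRepSummand_trivial_iff (ρ : Representation k G V) :
    IsRepSummand ρ (Representation.trivial k G k) ↔
      ∃ s : V, (∀ g, ρ g s = s) ∧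
        ∃ lam : V →ₗ[k] k, (∀ g v, lam (ρ g v) = lam v) ∧ lam s = 1 := by
  constructor
  · rintro ⟨lam, ι, hlι, hlam, hι⟩
    refine ⟨ι 1, fun g => ?_, lam, fun g v => ?_, ?_⟩
    · simpa using LinearMap.congr_fun (hι g) 1
    · simpa using LinearMap.congr_fun (hlam g) v
    · simpa using LinearMap.congr_fun hlι 1
  · rintro ⟨s, hs, lam, hlam, hlams⟩
    refine ⟨lam, LinearMap.toSpanSingleton k V s, ?_, fun g => ?_, fun g => ?_⟩ <;>
      ext <;> simp [hs, hlam, hlams]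

end Summands

section PermutationBasis

variable {k : Type*} [CommRing k] {G : Type*} [Group G]
variable {V : Type*} [AddCommGroup V] [Module k V] {ι : Type*}

@[reducible] def basisIndexAction [Nontrivial k] (ρ : Representation k G V)
    (b : Module.Basis ι k V) (hb : ∀ g i, ∃ j, ρ g (b i) = b j) : MulAction G ι where
  smul g i := (hb g i).choose
  one_smul i := b.injective <| by
    change b (hb 1 i).choose = b i
    rw [← (hb 1 i).choose_spec, map_one, Module.End.one_apply]
  mul_smul g h i := b.injective <| by
    change b (hb (g * h) i).choose = b (hb g (hb h i).choose).choose
    rw [← (hb (g * h) i).choose_spec, ← (hb g _).choose_spec, ← (hb h i).choose_spec, map_mul,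
      Module.End.mul_apply]

theorem basisIndexAction_spec [Nontrivial k] (ρ : Representation k G V) (b : Module.Basis ι k V)
    (hb : ∀ g i, ∃ j, ρ g (b i) = b j) (g : G) (i : ι) :
    letI := basisIndexAction ρ b hb
    ρ g (b i) = b (g • i) :=
  (hb g i).choose_spec

variable [MulAction G ι] {ρ : Representation k G V} {b : Module.Basis ι k V}

theorem Module.Basis.repr_apply_smul_of_permutes (hb : ∀ g i, ρ g (b i) = b (g • i))
    (g : G) (v : V) (i : ι) : b.repr (ρ g v) (g • i) = b.repr v i := by
  have : (Finsupp.lapply (g • i)) ∘ₗ b.repr.toLinearMap ∘ₗ ρ g =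
      (Finsupp.lapply i) ∘ₗ b.repr.toLinearMap := by
    refine b.ext fun j => ?_
    simp [hb, Finsupp.single_apply_left (MulAction.injective g)]
  exact LinearMap.congr_fun this v

theorem isRepSummand_trivial_of_permutes_of_fixed (hb : ∀ g i, ρ g (b i) = b (g • i))
    {i : ι} (hi : ∀ g : G, g • i = i) : IsRepSummand ρ (Representation.trivial k G k) := by
  refine (isRepSummand_trivial_iff ρ).2 ⟨b i, fun g => by rw [hb, hi], b.coord i, ?_, by simp⟩
  intro g v
  conv_lhs => rw [← hi g]
  exact b.repr_apply_smul_of_permutes hb g v i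

theorem equivFinsuppOfBasisRight_tprod_apply_smul {U : Type*} [AddCommGroup U] [Module k U]
    [DecidableEq ι] (hb : ∀ g i, ρ g (b i) = b (g • i)) (σ : Representation k G U) (g : G)
    (m : U ⊗[k] V) (i : ι) :
    TensorProduct.equivFinsuppOfBasisRight b (σ.tprod ρ g m) (g • i) =
      σ g (TensorProduct.equivFinsuppOfBasisRight b m i) := by
  induction m using TensorProduct.induction_on with
  | zero => simp
  | tmul u v =>
    simp only [Representation.tprod_apply, TensorProduct.map_tmul,
      TensorProduct.equivFinsuppOfBasisRight_apply_tmul_apply, map_smul,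
      b.repr_apply_smul_of_permutes hb]
  | add m n hm hn => simp only [map_add, Finsupp.add_apply, hm, hn]

end PermutationBasis

section Orbits

open Finset

variable {G : Type*} [Group G] [Fintype G] {ι : Type*} [MulAction G ι] [DecidableEq ι]

theorem Finset.sum_mem_of_orbit_sum_mem {M : Type*} [AddCommMonoid M] (N : AddSubmonoid M)
    (F : ι → M) (T : Finset ι) (hT : ∀ (g : G), ∀ i ∈ T, g • i ∈ T)
    (horbit : ∀ i ∈ T, ∑ j ∈ univ.image (· • i : G → ι), F j ∈ N) : ∑ i ∈ T, F i ∈ N := by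
  induction T using Finset.strongInduction with
  | H T ih =>
    obtain rfl | ⟨i, hi⟩ := T.eq_empty_or_nonempty
    · simp
    set O := univ.image (· • i : G → ι)
    have hOT : O ⊆ T := by
      intro j hj
      obtain ⟨g, -, rfl⟩ := mem_image.1 hj
      exact hT g i hi
    have mem_O_of_smul_mem_O : ∀ (g : G) (j : ι), g • j ∈ O → j ∈ O := by
      intro g j hj
      obtain ⟨h, -, hh⟩ := mem_image.1 hj
      exact mem_image.2 ⟨g⁻¹ * h, mem_univ _, by rw [mul_smul, hh, inv_smul_smul]⟩
    rw [← Finset.sum_sdiff hOT]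
    refine N.add_mem (ih _ (sdiff_ssubset hOT ⟨i, mem_image.2 ⟨1, mem_univ _, one_smul G i⟩⟩)
      (fun g j hj => ?_) (fun j hj => horbit j (sdiff_subset hj))) (horbit i hi)
    rw [mem_sdiff] at hj ⊢
    exact ⟨hT g j hj.1, fun h => hj.2 (mem_O_of_smul_mem_O g j h)⟩

theorem IsPGroup.dvd_card_orbit_of_not_fixed {p : ℕ} [Fact p.Prime] (hG : IsPGroup p G)
    {i : ι} (hi : ∃ g : G, g • i ≠ i) : p ∣ (univ.image (· • i : G → ι)).card := by
  have hcard : (univ.image (· • i : G → ι)).card = Nat.card (MulAction.orbit G i) := by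
    rw [Nat.card_coe_set_eq, ← Set.ncard_coe_finset, coe_image, coe_univ, Set.image_univ]
    rfl
  have : Finite (MulAction.orbit G i) := (Set.finite_range _).to_subtype
  obtain ⟨n, hn⟩ := hG.card_orbit i
  rw [hcard, hn]
  rcases n with _ | n
  · obtain ⟨g, hg⟩ := hi
    rw [pow_zero, Nat.card_eq_one_iff_unique] at hn
    exact absurd (congrArg Subtype.val (hn.1.elim ⟨g • i, g, rfl⟩ ⟨i, 1, one_smul G i⟩)) hg
  · exact dvd_pow_self p n.succ_ne_zero

theorem IsPGroup.sum_eq_sum_filter_fixed {p : ℕ} [Fact p.Prime] (hG : IsPGroup p G)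
    {k : Type*} [CommRing k] [CharP k p] (φ : ι → k) (hφ : ∀ (g : G) i, φ (g • i) = φ i)
    (T : Finset ι) (hT : ∀ (g : G), ∀ i ∈ T, g • i ∈ T) :
    ∑ i ∈ T, φ i = ∑ i ∈ T with ∀ g : G, g • i = i, φ i := by
  rw [← sum_filter_add_sum_filter_not T (fun i => ∀ g : G, g • i = i), add_eq_left,
    ← AddSubmonoid.mem_bot]
  refine sum_mem_of_orbit_sum_mem (G := G) ⊥ φ _ (fun g i hi => ?_) (fun i hi => ?_)
  · simp only [mem_filter, not_forall] at hi ⊢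
    obtain ⟨hiT, h, hh⟩ := hi
    refine ⟨hT g i hiT, g * h * g⁻¹, ?_⟩
    rwa [smul_smul, inv_mul_cancel_right, mul_smul, smul_left_cancel_iff]
  · have hdvd := hG.dvd_card_orbit_of_not_fixed (not_forall.1 (mem_filter.1 hi).2)
    rw [sum_congr rfl (g := fun _ => φ i) (by simp [hφ]), sum_const, nsmul_eq_mul,
      (CharP.cast_eq_zero_iff k p _).2 hdvd, zero_mul]
    exact AddSubmonoid.zero_mem _

end Orbits

section Brauer

open Finset

variable {G : Type*} [Group G] [Fintype G]

theorem relTrace_stabilizer_top_eq_sum_orbit {A : Type*} [Ring A] [MulSemiringAction G A]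
    [DecidableEq A] (a : A) :
    relTrace A (MulAction.stabilizer G a) ⊤ a = ∑ b ∈ univ.image (· • a : G → A), b := by
  let _ : Fintype (↥(⊤ : Subgroup G) ⧸ (MulAction.stabilizer G a).subgroupOf ⊤) :=
    Fintype.ofFinite _
  rw [relTrace, finsum_eq_sum_of_fintype]
  refine sum_bij (fun y _ => ((Quotient.out y : ↥(⊤ : Subgroup G)) : G) • a)
    (fun y _ => mem_image_of_mem _ (mem_univ _)) (fun y₁ _ y₂ _ h => ?_) (fun b hb => ?_)
    (fun _ _ => rfl)
  · rw [← QuotientGroup.out_eq' y₁, ← QuotientGroup.out_eq' y₂, QuotientGroup.eq,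
      Subgroup.mem_subgroupOf, MulAction.mem_stabilizer_iff]
    simp only [Subgroup.coe_mul, Subgroup.coe_inv, mul_smul, inv_smul_eq_iff]
    exact h.symm
  · obtain ⟨g, -, rfl⟩ := mem_image.1 hb
    obtain ⟨h, hh⟩ := QuotientGroup.mk_out_eq_mul ((MulAction.stabilizer G a).subgroupOf ⊤)
      (⟨g, Subgroup.mem_top g⟩ : ↥(⊤ : Subgroup G))
    refine ⟨QuotientGroup.mk ⟨g, Subgroup.mem_top g⟩, mem_univ _, ?_⟩
    rw [hh, Subgroup.coe_mul, mul_smul]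
    congr 1
    exact Subgroup.mem_subgroupOf.1 h.2

theorem relTrace_mem_brKerSub {k A : Type*} [Field k] [Ring A] [Algebra k A]
    [MulSemiringAction G A] [SMulCommClass G k A] [DecidableEq A] {a : A}
    (ha : ∃ g : G, g • a ≠ a) :
    ∑ b ∈ univ.image (· • a : G → A), b ∈ brKerSub k A (⊤ : Subgroup G) := by
  have hlt : MulAction.stabilizer G a < ⊤ := by
    obtain ⟨g, hg⟩ := ha
    exact lt_top_iff_ne_top.2 fun h => hg (MulAction.mem_stabilizer_iff.1 (h ▸ Subgroup.mem_top g))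
  rw [← relTrace_stabilizer_top_eq_sum_orbit]
  refine (le_iSup₂ (f := fun Q (_ : Q ∈ {Q : Subgroup G | Q < ⊤}) => relTraceSub k A Q ⊤) _ hlt)
    (Submodule.subset_span ⟨a, fun g hg => hg, rfl⟩)

omit [Fintype G] in
theorem exists_fixed_index_of_nontrivial_brauerQuotient [Finite G] {k A : Type*} [Field k] [Ring A]
    [Algebra k A] [MulSemiringAction G A] [SMulCommClass G k A] {ι : Type*} [MulAction G ι]
    {b : Module.Basis ι k A} (hb : ∀ (g : G) i, g • b i = b (g • i))
    [Nontrivial (BrauerQuotient k A (⊤ : Subgroup G))] : ∃ i : ι, ∀ g : G, g • i = i := by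
  classical
  have := Fintype.ofFinite G
  by_contra! hmoved
  obtain ⟨z, hz⟩ := exists_ne (0 : BrauerQuotient k A (⊤ : Subgroup G))
  obtain ⟨z, rfl⟩ := Submodule.Quotient.mk_surjective _ z
  refine hz ((Submodule.Quotient.mk_eq_zero _).2 (Submodule.mem_comap.2 ?_))
  have hc : ∀ (g : G) i, b.repr z (g • i) = b.repr z i := fun g i => by
    conv_lhs => rw [← z.2 g (Subgroup.mem_top g)]
    exact b.repr_apply_smul_of_permutes (ρ := Representation.ofDistribMulAction k G A) hb g z i
  rw [Submodule.subtype_apply, ← b.linearCombination_repr z, Finsupp.linearCombination_apply,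
    Finsupp.sum]
  refine sum_mem_of_orbit_sum_mem (G := G) (brKerSub k A (⊤ : Subgroup G)).toAddSubmonoid _ _
    (fun g i hi => by simpa [hc] using hi) (fun i _ => ?_)
  have horbit : ∑ j ∈ univ.image (· • i : G → ι), b j = ∑ a ∈ univ.image (· • b i : G → A), a :=
    calc ∑ j ∈ univ.image (· • i : G → ι), b j
        = ∑ a ∈ (univ.image (· • i : G → ι)).image b, a :=
          (sum_image (f := fun a => a) b.injective.injOn).symm
      _ = _ := by simp only [image_image, Function.comp_def, hb]
  rw [sum_congr rfl (g := fun j => b.repr z i • b j) fun j hj => by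
      obtain ⟨g, -, rfl⟩ := mem_image.1 hj
      rw [hc], ← smul_sum, horbit]
  obtain ⟨g, hg⟩ := hmoved i
  exact Submodule.smul_mem (brKerSub k A (⊤ : Subgroup G)) _
    (relTrace_mem_brKerSub ⟨g, by rwa [hb, Ne, b.injective.eq_iff]⟩)

end Brauer

theorem isRepSummand_ofDistribMulAction_of_embedding {k G A M : Type*} [Field k] [Group G]
    [Ring A] [Algebra k A] [MulSemiringAction G A] [SMulCommClass G k A] [Ring M] [Algebra k M]
    (ρ : Representation k G M) (hρ : ∀ g m n, ρ g (m * n) = ρ g m * ρ g n)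
    (f : A →ₙₐ[k] M) (hf : Function.Injective f)
    (hrange : Set.range f = {m | ∃ y, m = f 1 * y * f 1})
    (hfρ : ∀ g a, f (g • a) = ρ g (f a)) :
    IsRepSummand ρ (Representation.ofDistribMulAction k G A) := by
  obtain ⟨r, hr⟩ := (f : A →ₗ[k] M).exists_leftInverse_of_injective (LinearMap.ker_eq_bot.2 hf)
  have hrf : ∀ a, r (f a) = a := LinearMap.congr_fun hr
  have hρe : ∀ g, ρ g (f 1) = f 1 := fun g => by rw [← hfρ, smul_one]
  have hcorner : ∀ m, f 1 * (m * f 1) ∈ Set.range f := fun m => by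
    rw [hrange]
    exact ⟨m, (mul_assoc _ _ _).symm⟩
  refine ⟨r ∘ₗ LinearMap.mulLeft k (f 1) ∘ₗ LinearMap.mulRight k (f 1), f, ?_,
    fun g => LinearMap.ext fun m => ?_, fun g => LinearMap.ext fun a => hfρ g a |>.symm⟩
  · ext a
    simp [← map_mul, hrf]
  · obtain ⟨a, ha⟩ := hcorner m
    simp only [LinearMap.comp_apply, LinearMap.mulLeft_apply, LinearMap.mulRight_apply,
      Representation.ofDistribMulAction_apply_apply]
    rw [← hρe g, ← hρ, ← hρ, hρe, ← ha, ← hfρ, hrf, hrf]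

section Conjugation

variable {k G V B : Type*} [CommRing k] [Group G] [AddCommGroup V] [Module k V] [Ring B]
  [Algebra k B] (ρ : Representation k G V) {τ : Representation k G B} {u : G →* Bˣ}

theorem tprod_linHom_apply_eq_conj (hτ : ∀ g b, τ g b = u g * b * ((u g)⁻¹ : Bˣ)) (g : G)
    (m : (V →ₗ[k] V) ⊗[k] B) :
    (Representation.linHom ρ ρ).tprod τ g m =
      (ρ g ⊗ₜ[k] (u g : B)) * m * (ρ g⁻¹ ⊗ₜ[k] (((u g)⁻¹ : Bˣ) : B)) := by
  induction m using TensorProduct.induction_on with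
  | zero => simp
  | tmul f b =>
    rw [Representation.tprod_apply, TensorProduct.map_tmul, Algebra.TensorProduct.tmul_mul_tmul,
      Algebra.TensorProduct.tmul_mul_tmul, Representation.linHom_apply, hτ]
    rfl
  | add m n hm hn => rw [map_add, hm, hn, mul_add, add_mul]

theorem tprod_linHom_apply_mul (hτ : ∀ g b, τ g b = u g * b * ((u g)⁻¹ : Bˣ)) (g : G)
    (m n : (V →ₗ[k] V) ⊗[k] B) :
    (Representation.linHom ρ ρ).tprod τ g (m * n) =
      (Representation.linHom ρ ρ).tprod τ g m * (Representation.linHom ρ ρ).tprod τ g n := by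
  have hinv : (ρ g⁻¹ ⊗ₜ[k] (((u g)⁻¹ : Bˣ) : B)) * (ρ g ⊗ₜ[k] (u g : B)) = 1 := by
    rw [Algebra.TensorProduct.tmul_mul_tmul, ← map_mul, inv_mul_cancel,
      map_one, Units.inv_mul, Algebra.TensorProduct.one_def]
  simp only [tprod_linHom_apply_eq_conj ρ hτ, mul_assoc]
  rw [← mul_assoc _ (ρ g ⊗ₜ[k] (u g : B)), hinv, one_mul]

end Conjugation

theorem isRepSummand_trivial_of_tprod_permutation {k G U V ι : Type*} [Field k] {p : ℕ}
    [Fact p.Prime] [CharP k p] [Group G] [Finite G] (hG : IsPGroup p G)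
    [AddCommGroup U] [Module k U] [AddCommGroup V] [Module k V] [MulAction G ι]
    {σ : Representation k G U} {ρ : Representation k G V} {b : Module.Basis ι k V}
    (hb : ∀ g i, ρ g (b i) = b (g • i))
    (h : IsRepSummand (σ.tprod ρ) (Representation.trivial k G k)) :
    IsRepSummand σ (Representation.trivial k G k) := by
  classical
  have := Fintype.ofFinite G
  obtain ⟨w, hw, μ, hμ, hμw⟩ := (isRepSummand_trivial_iff _).1 h
  set f := TensorProduct.equivFinsuppOfBasisRight b w
  have hf : ∀ (g : G) i, f (g • i) = σ g (f i) := fun g i => by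
    rw [← equivFinsuppOfBasisRight_tprod_apply_smul hb, hw]
  have hμσ : ∀ (g : G) (u : U) i, μ (σ g u ⊗ₜ b (g • i)) = μ (u ⊗ₜ b i) := fun g u i => by
    rw [← hb, ← TensorProduct.map_tmul, ← Representation.tprod_apply, hμ]
  let φ : ι → k := fun i => μ (f i ⊗ₜ b i)
  have hφ : ∀ (g : G) i, φ (g • i) = φ i := fun g i => by simp only [φ, hf, hμσ]
  have hsupport : ∀ (g : G), ∀ i ∈ f.support, g • i ∈ f.support := fun g i hi => by
    rw [Finsupp.mem_support_iff, hf]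
    exact fun h0 => Finsupp.mem_support_iff.1 hi (by simpa using congrArg (σ g⁻¹) h0)
  have hsum : ∑ i ∈ f.support with ∀ g : G, g • i = i, φ i = 1 := by
    rw [← hG.sum_eq_sum_filter_fixed φ hφ _ hsupport, ← hμw,
      ← (TensorProduct.equivFinsuppOfBasisRight b).symm_apply_apply w,
      TensorProduct.equivFinsuppOfBasisRight_symm_apply, Finsupp.sum, map_sum]
  obtain ⟨i, hi, hφi⟩ := Finset.exists_ne_zero_of_sum_ne_zero (hsum ▸ one_ne_zero)
  have hfix : ∀ g : G, g • i = i := (Finset.mem_filter.1 hi).2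
  refine (isRepSummand_trivial_iff σ).2 ⟨f i, fun g => by rw [← hf, hfix],
    (φ i)⁻¹ • μ ∘ₗ (TensorProduct.mk k U V).flip (b i), fun g u => ?_, inv_mul_cancel₀ hφi⟩
  simp only [LinearMap.smul_apply, LinearMap.comp_apply, LinearMap.flip_apply,
    TensorProduct.mk_apply]
  rw [← hfix g, hμσ, hfix]

theorem stmt18_general (k : Type*) [Field k] (p : ℕ) [Fact p.Prime] [CharP k p]
    (P : Type*) [Group P] [Finite P] (hP : IsPGroup p P)
    -- the module V and S = End_k(V)
    (V : Type*) [AddCommGroup V] [Module k V]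
    (ρ : Representation k P V)
    -- B, an interior P-algebra with the conjugation action
    (B : Type*) [Ring B] [Algebra k B] [MulSemiringAction P B] [SMulCommClass P k B]
    (σB : P →* Bˣ)
    (hBint : ∀ (x : P) (b : B), x • b = (σB x : B) * b * (((σB x)⁻¹ : Bˣ) : B))
    {ιB : Type*} (basB : Module.Basis ιB k B)
    (hBstable : ∀ (x : P) (i : ιB), ∃ j : ιB, x • (basB i) = basB j)
    -- A, an interior P-algebra with the conjugation action
    (A : Type*) [Ring A] [Algebra k A] [MulSemiringAction P A] [SMulCommClass P k A]
    (σA : P →* Aˣ)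
    (hAint : ∀ (x : P) (a : A), x • a = (σA x : A) * a * (((σA x)⁻¹ : Aˣ) : A))
    {ιA : Type*} (basA : Module.Basis ιA k A)
    (hAstable : ∀ (x : P) (i : ιA), ∃ j : ιA, x • (basA i) = basA j)
    (hAP : Nontrivial (BrauerQuotient k A (⊤ : Subgroup P)))
    -- the interior P-algebra embedding g : A → S ⊗ B
    (g : A →ₙₐ[k] ((V →ₗ[k] V) ⊗[k] B)) (hginj : Function.Injective g)
    (hgim : Set.range g = {x | ∃ y, x = g 1 * y * g 1})
    (hgint : ∀ (x : P) (a : A),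
      g ((σA x : A) * a) = ((ρ x : V →ₗ[k] V) ⊗ₜ[k] (σB x : B)) * g a ∧
      g (a * (σA x : A)) = g a * ((ρ x : V →ₗ[k] V) ⊗ₜ[k] (σB x : B))) :
    ∃ s : V →ₗ[k] V, (∀ x : P, ρ x ∘ₗ s = s ∘ₗ ρ x) ∧
      ∃ lam : (V →ₗ[k] V) →ₗ[k] k,
        (∀ (x : P) (f : V →ₗ[k] V), lam (ρ x ∘ₗ f ∘ₗ ρ x⁻¹) = lam f) ∧ lam s = 1 := by
  let _ := basisIndexAction (Representation.ofDistribMulAction k P A) basA hAstable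
  let _ := basisIndexAction (Representation.ofDistribMulAction k P B) basB hBstable
  have hbasA := basisIndexAction_spec (Representation.ofDistribMulAction k P A) basA hAstable
  have hbasB := basisIndexAction_spec (Representation.ofDistribMulAction k P B) basB hBstable
  have hA : IsRepSummand (Representation.ofDistribMulAction k P A)
      (Representation.trivial k P k) := by
    obtain ⟨i, hi⟩ := exists_fixed_index_of_nontrivial_brauerQuotient hbasA
    exact isRepSummand_trivial_of_permutes_of_fixed hbasA hi
  have hg : ∀ (x : P) (a : A), g (x • a) =
      (Representation.linHom ρ ρ).tprod (Representation.ofDistribMulAction k P B) x (g a) := by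
    intro x a
    rw [tprod_linHom_apply_eq_conj ρ hBint, hAint, mul_assoc, (hgint x _).1, ← map_inv σA,
      (hgint x⁻¹ a).2, map_inv σB, mul_assoc]
  have hS := isRepSummand_trivial_of_tprod_permutation hP hbasB
    ((isRepSummand_ofDistribMulAction_of_embedding _ (tprod_linHom_apply_mul ρ hBint) g hginj
      hgim hg).trans hA)
  obtain ⟨s, hs, lam, hlam, hlams⟩ := (isRepSummand_trivial_iff _).1 hS
  have hsρ := (Representation.mem_linHom_invariants_iff_isIntertwining s).1 hs
  exact ⟨s, fun x => LinearMap.ext fun v => (hsρ.isIntertwining x v).symm, lam, hlam, hlams⟩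

/-- (Puig's Lemma 7.18, over a field of characteristic `p`.)
With `V` a finitely generated indecomposable `kP`-module with vertex `P`, `S = End_k(V)`,
`B` an interior `P`-algebra with `P`-stable basis, `B(P) ≠ 0` and `1_B` primitive in `B^P`,
and `A` an interior `P`-algebra with `P`-stable basis, `A(P) ≠ 0`, admitting an interior
`P`-algebra embedding `g : A → S ⊗ B`: the trivial `kP`-module is a direct summand of `S`
with the conjugation action, i.e. there are a conjugation-fixed `s ∈ S` and a
conjugation-equivariant linear form `lam` on `S` with `lam s = 1`. -/
theorem stmt18 (k : Type*) [Field k] (p : ℕ) [Fact p.Prime] [CharP k p]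
    (P : Type*) [Group P] [Finite P] (hP : IsPGroup p P)
    -- the module V and S = End_k(V)
    (V : Type*) [AddCommGroup V] [Module k V] [Module.Finite k V]
    (ρ : Representation k P V) (hVind : RepIndecomposable ρ)
    (hVvx : IsVertex ρ (⊤ : Subgroup P))
    -- B, an interior P-algebra with the conjugation action
    (B : Type*) [Ring B] [Algebra k B] [MulSemiringAction P B] [SMulCommClass P k B]
    (σB : P →* Bˣ)
    (hBint : ∀ (x : P) (b : B), x • b = (σB x : B) * b * (((σB x)⁻¹ : Bˣ) : B))
    {ιB : Type*} (basB : Module.Basis ιB k B)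
    (hBstable : ∀ (x : P) (i : ιB), ∃ j : ιB, x • (basB i) = basB j)
    (hBP : Nontrivial (BrauerQuotient k B (⊤ : Subgroup P)))
    (hBprim : ∀ e₁ e₂ : B, e₁ ∈ fixedPts k B (⊤ : Subgroup P) →
      e₂ ∈ fixedPts k B (⊤ : Subgroup P) → IsIdempotentElem e₁ → IsIdempotentElem e₂ →
      e₁ * e₂ = 0 → e₂ * e₁ = 0 → (1 : B) = e₁ + e₂ → e₁ = 0 ∨ e₂ = 0)
    -- A, an interior P-algebra with the conjugation action
    (A : Type*) [Ring A] [Algebra k A] [MulSemiringAction P A] [SMulCommClass P k A]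
    (σA : P →* Aˣ)
    (hAint : ∀ (x : P) (a : A), x • a = (σA x : A) * a * (((σA x)⁻¹ : Aˣ) : A))
    {ιA : Type*} (basA : Module.Basis ιA k A)
    (hAstable : ∀ (x : P) (i : ιA), ∃ j : ιA, x • (basA i) = basA j)
    (hAP : Nontrivial (BrauerQuotient k A (⊤ : Subgroup P)))
    -- the interior P-algebra embedding g : A → S ⊗ B
    (g : A →ₙₐ[k] ((V →ₗ[k] V) ⊗[k] B)) (hginj : Function.Injective g)
    (hgim : Set.range g = {x | ∃ y, x = g 1 * y * g 1})
    (hgint : ∀ (x : P) (a : A),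
      g ((σA x : A) * a) = ((ρ x : V →ₗ[k] V) ⊗ₜ[k] (σB x : B)) * g a ∧
      g (a * (σA x : A)) = g a * ((ρ x : V →ₗ[k] V) ⊗ₜ[k] (σB x : B))) :
    ∃ s : V →ₗ[k] V, (∀ x : P, ρ x ∘ₗ s = s ∘ₗ ρ x) ∧
      ∃ lam : (V →ₗ[k] V) →ₗ[k] k,
        (∀ (x : P) (f : V →ₗ[k] V), lam (ρ x ∘ₗ f ∘ₗ ρ x⁻¹) = lam f) ∧ lam s = 1 :=
  stmt18_general k p P hP V ρ B σB hBint basB hBstable A σA hAint basA hAstable hAP g hginj hgim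
    hgint
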